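/- Let Φ be one of the symbols Ω, Γ and Ψ one of the symbols 𝒪, Ω, Γ, with the couple ⟨Φ,Ψ⟩ different from ⟨Ω,𝒪⟩, and let X be an infinite Hausdorff topological space. Then X is an S_fin(Φ,Ψ)-space if and only if for every h ∈ USC*_p(X) the family USC*_p(X) satisfies the selection principle S_fin(Φ_h,Ψ_h). If moreover X possesses property (ε), the equivalence holds also for the couple ⟨Ω,𝒪⟩. -/

import Mathlib

open Set Filter Topology

namespace Selectors

variable {X : Type*}

/-- Kinds of covers / of pointwise properties: `o` (ordinary covers / 𝒪),
`omega` (ω-covers / Ω), `gamma` (γ-covers / Γ). -/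
inductive CoverKind : Type
  | o | omega | gamma

/-- `f` is a bounded upper semicontinuous real function on `X`. -/
def IsUSCb [TopologicalSpace X] (f : X → ℝ) : Prop :=
  (∀ a : ℝ, IsOpen {x | f x < a}) ∧ ∃ M : ℝ, ∀ x, |f x| ≤ M

/-- `USC*_p(X)`: the set of bounded upper semicontinuous real functions on `X`,
regarded as a subset of `X → ℝ` with the product (pointwise convergence) topology. -/
def USCb (X : Type*) [TopologicalSpace X] : Set (X → ℝ) := {f | IsUSCb f}

/-- `C*_p(X)`: the set of bounded continuous real functions on `X`. -/
def Cb (X : Type*) [TopologicalSpace X] : Set (X → ℝ) :=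
  {f | Continuous f ∧ ∃ M : ℝ, ∀ x, |f x| ≤ M}

/-- `𝒰` is a cover of `X`. -/
def IsCover (𝒰 : Set (Set X)) : Prop := ∀ x : X, ∃ U ∈ 𝒰, x ∈ U

/-- The (not necessarily open) cover condition of the given kind:
an `o`-cover is a cover; an ω-cover is a cover not containing `X` such that every
finite subset of `X` is contained in a member; a γ-cover is an infinite cover such
that each point belongs to all but finitely many members. -/
def kindSets (k : CoverKind) (𝒰 : Set (Set X)) : Prop :=
  match k with
  | .o => IsCover 𝒰
  | .omega => IsCover 𝒰 ∧ Set.univ ∉ 𝒰 ∧ ∀ F : Set X, F.Finite → ∃ U ∈ 𝒰, F ⊆ U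
  | .gamma => IsCover 𝒰 ∧ 𝒰.Infinite ∧ ∀ x : X, {U ∈ 𝒰 | x ∉ U}.Finite

/-- The family `𝒪(X)`, `Ω(X)` or `Γ(X)` of open covers/ω-covers/γ-covers of `X`. -/
def OpenKindCovers (X : Type*) [TopologicalSpace X] (k : CoverKind) : Set (Set (Set X)) :=
  {𝒰 | (∀ U ∈ 𝒰, IsOpen U) ∧ kindSets k 𝒰}

/-- The selection principle `S₁(A, B)`. -/
def S1 {α : Type*} (A B : Set (Set α)) : Prop :=
  ∀ u : ℕ → Set α, (∀ n, u n ∈ A) →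
    ∃ sel : ℕ → α, (∀ n, sel n ∈ u n) ∧ Set.range sel ∈ B

/-- The selection principle `S_fin(A, B)`. -/
def Sfin {α : Type*} (A B : Set (Set α)) : Prop :=
  ∀ u : ℕ → Set α, (∀ n, u n ∈ A) →
    ∃ V : ℕ → Set α, (∀ n, V n ⊆ u n ∧ (V n).Finite) ∧ (⋃ n, V n) ∈ B

/-- Property `(𝒪_h)` of a family `F` of real functions. -/
def PropO (h : X → ℝ) (F : Set (X → ℝ)) : Prop :=
  ∀ x : X, h x ∈ closure ((fun f : X → ℝ => f x) '' F)

/-- Property `(Ω_h)`: `h ∉ F` and `h` belongs to the closure of `F` in `ℝ^X`. -/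
def PropOmega (h : X → ℝ) (F : Set (X → ℝ)) : Prop :=
  h ∉ F ∧ h ∈ closure F

/-- Property `(Γ_h)`. -/
def PropGamma (h : X → ℝ) (F : Set (X → ℝ)) : Prop :=
  F.Infinite ∧ ∀ ε : ℝ, 0 < ε → ∀ x : X, {f ∈ F | ε ≤ |f x - h x|}.Finite

/-- Property `(Φ_h)` for `Φ = 𝒪, Ω, Γ`. -/
def kindProp (k : CoverKind) (h : X → ℝ) (F : Set (X → ℝ)) : Prop :=
  match k with
  | .o => PropO h F
  | .omega => PropOmega h F
  | .gamma => PropGamma h F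

/-- The family `Φ_h(H) = {F ⊆ H : F has (Φ_h) and ∀ f ∈ F, f ≥ h ∧ f - h ∈ H}`. -/
def PhiH (k : CoverKind) (h : X → ℝ) (H : Set (X → ℝ)) : Set (Set (X → ℝ)) :=
  {F | F ⊆ H ∧ kindProp k h F ∧ ∀ f ∈ F, h ≤ f ∧ f - h ∈ H}

/-- `F ⊆ H` is sequentially dense in `H` (with respect to pointwise convergence). -/
def SeqDenseIn (F H : Set (X → ℝ)) : Prop :=
  F ⊆ H ∧ ∀ f ∈ H, ∃ u : ℕ → (X → ℝ), (∀ n, u n ∈ F) ∧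
    Filter.Tendsto u Filter.atTop (nhds f)

/-- `F ⊆ H` is dense in `H`. -/
def DenseIn (F H : Set (X → ℝ)) : Prop :=
  F ⊆ H ∧ H ⊆ closure F

/-- `F` is pointwise dense: `{f x : f ∈ F}` is dense in `ℝ` for every `x`. -/
def PointwiseDense (F : Set (X → ℝ)) : Prop :=
  ∀ x : X, Dense {y : ℝ | ∃ f ∈ F, f x = y}

/-- `F ⊆ H` is upper sequentially dense in `H`. -/
def UpperSeqDenseIn (F H : Set (X → ℝ)) : Prop :=
  F ⊆ H ∧ ∀ f ∈ H, ∃ u : ℕ → (X → ℝ),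
    (∀ n, u n ∈ F ∧ f ≤ u n ∧ u n - f ∈ H) ∧
    Filter.Tendsto u Filter.atTop (nhds f)

/-- `F ⊆ H` is upper dense in `H`: for every `f ∈ H` the set
`{h ∈ F : h ≥ f ∧ h - f ∈ H}` is dense in `{h ∈ H : h ≥ f}`. -/
def UpperDenseIn (F H : Set (X → ℝ)) : Prop :=
  F ⊆ H ∧ ∀ f ∈ H, {g | g ∈ H ∧ f ≤ g} ⊆ closure {g | g ∈ F ∧ f ≤ g ∧ g - f ∈ H}

/-- `𝒮(H)`: the family of sequentially dense subsets of `H`. -/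
def Sfam (H : Set (X → ℝ)) : Set (Set (X → ℝ)) := {F | SeqDenseIn F H}

/-- `𝒟(H)`: the family of dense subsets of `H`. -/
def Dfam (H : Set (X → ℝ)) : Set (Set (X → ℝ)) := {F | DenseIn F H}

/-- `𝒫(H)`: the family of pointwise dense subsets of `H`. -/
def Pfam (H : Set (X → ℝ)) : Set (Set (X → ℝ)) := {F | F ⊆ H ∧ PointwiseDense F}

/-- `Φ̃↑(H)`: for `Φ = Γ` the upper sequentially dense subsets, for `Φ = Ω`
the upper dense subsets, for `Φ = 𝒪` the pointwise dense subsets of `H`. -/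
def upTilde (k : CoverKind) (H : Set (X → ℝ)) : Set (Set (X → ℝ)) :=
  match k with
  | .o => Pfam H
  | .omega => {F | UpperDenseIn F H}
  | .gamma => {F | UpperSeqDenseIn F H}

/-- `H` is separable: it has a countable dense subset. -/
def SeparableSet (H : Set (X → ℝ)) : Prop := ∃ D, D.Countable ∧ DenseIn D H

/-- `H` is sequentially separable: it has a countable sequentially dense subset. -/
def SeqSeparableSet (H : Set (X → ℝ)) : Prop := ∃ D, D.Countable ∧ SeqDenseIn D H

/-- Property `(ε)`: every open ω-cover contains a countable ω-subcover. -/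
def PropEps (X : Type*) [TopologicalSpace X] : Prop :=
  ∀ 𝒰 : Set (Set X), 𝒰 ∈ OpenKindCovers X CoverKind.omega →
    ∃ 𝒱 ⊆ 𝒰, 𝒱.Countable ∧ 𝒱 ∈ OpenKindCovers X CoverKind.omega

/-- `S` is an `F_σ` set with respect to the topology `t`. -/
def IsFsigmaIn (t : TopologicalSpace X) (S : Set X) : Prop :=
  ∃ C : ℕ → Set X, (∀ n, IsClosed[t] (C n)) ∧ S = ⋃ n, C n

/-- `S` is locally closed with respect to `t`: an intersection of a `t`-open
and a `t`-closed set. -/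
def IsLocallyClosedIn (t : TopologicalSpace X) (S : Set X) : Prop :=
  ∃ U F : Set X, IsOpen[t] U ∧ IsClosed[t] F ∧ S = U ∩ F

/-- `S` is a cozero set with respect to `t`. -/
def IsCozeroIn (t : TopologicalSpace X) (S : Set X) : Prop :=
  ∃ f : X → ℝ, @Continuous X ℝ t inferInstance f ∧ S = {x | f x ≠ 0}

/-- The `OB`-property of `⟨X, t⟩`: there is a separable metrizable topology `t'`
on `X` weaker than `t` such that every locally closed subset of `⟨X, t⟩` is an
`F_σ`-set in `t'`. -/
def OBProperty (X : Type*) [t : TopologicalSpace X] : Prop :=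
  ∃ t' : TopologicalSpace X,
    (∀ s : Set X, IsOpen[t'] s → IsOpen[t] s) ∧
    @TopologicalSpace.MetrizableSpace X t' ∧
    @TopologicalSpace.SeparableSpace X t' ∧
    ∀ S : Set X, IsLocallyClosedIn t S → IsFsigmaIn t' S

/-- The `V`-property of `⟨X, t⟩`: there is a separable metrizable topology `t'`
on `X` weaker than `t` such that every cozero subset of `⟨X, t⟩` is an
`F_σ`-set in `t'`. -/
def VProperty (X : Type*) [t : TopologicalSpace X] : Prop :=
  ∃ t' : TopologicalSpace X,
    (∀ s : Set X, IsOpen[t'] s → IsOpen[t] s) ∧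
    @TopologicalSpace.MetrizableSpace X t' ∧
    @TopologicalSpace.SeparableSpace X t' ∧
    ∀ S : Set X, IsCozeroIn t S → IsFsigmaIn t' S

/-- `iw(X) = ℵ₀`: `X` can be mapped by a one-to-one continuous map onto a
Tychonoff space of countable weight. -/
def IWCountable (X : Type*) [TopologicalSpace X] : Prop :=
  ∃ (Y : Type) (tY : TopologicalSpace Y) (f : X → Y),
    @Continuous X Y _ tY f ∧ Function.Bijective f ∧
    @T35Space Y tY ∧ @SecondCountableTopology Y tY

/-- `Φ^sh(X)`: the family of open shrinkable φ-covers of `X`. -/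
def ShFam (X : Type*) [TopologicalSpace X] (k : CoverKind) : Set (Set (Set X)) :=
  {𝒰 | 𝒰 ∈ OpenKindCovers X k ∧
    ∃ 𝒲 ∈ OpenKindCovers X k, ∀ W ∈ 𝒲, ∃ U ∈ 𝒰, closure W ⊆ U}

/-- A zero set. -/
def IsZeroSet [TopologicalSpace X] (S : Set X) : Prop :=
  ∃ f : X → ℝ, Continuous f ∧ S = {x | f x = 0}

/-- A cozero set. -/
def IsCozeroSet [TopologicalSpace X] (S : Set X) : Prop :=
  ∃ f : X → ℝ, Continuous f ∧ S = {x | f x ≠ 0}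

/-- `Φ^fsh_cz(X)`: the family of functionally shrinkable φ-covers of `X`
consisting of cozero sets. -/
def FshCzFam (X : Type*) [TopologicalSpace X] (k : CoverKind) : Set (Set (Set X)) :=
  {𝒰 | (∀ U ∈ 𝒰, IsCozeroSet U) ∧ kindSets k 𝒰 ∧
    ∃ 𝒲 : Set (Set X), (∀ W ∈ 𝒲, IsZeroSet W) ∧ kindSets k 𝒲 ∧
      ∀ W ∈ 𝒲, ∃ U ∈ 𝒰, closure W ⊆ U}

/-- The function `f_{U,g}`: equal to `0` on `U` and to `1 + sup |g|` off `U`. -/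
noncomputable def fU (U : Set X) (g : X → ℝ) : X → ℝ :=
  Uᶜ.indicator fun _ => 1 + ⨆ y, |g y|

/-- The family `S(𝒰) = {f_{U,g} + g : U ∈ 𝒰, g ∈ USC*_p(X)}`. -/
def SU [TopologicalSpace X] (𝒰 : Set (Set X)) : Set (X → ℝ) :=
  {f | ∃ U ∈ 𝒰, ∃ g ∈ USCb X, f = fU U g + g}

/-- The Sorgenfrey topology on `ℝ`, generated by the half-open intervals `[a, b)`. -/
def sorgenfreyTop : TopologicalSpace ℝ :=
  TopologicalSpace.generateFrom {s | ∃ a b : ℝ, s = Set.Ico a b}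

/-- The Sorgenfrey plane topology on `ℝ × ℝ`. -/
def sorgenfreyPlaneTop : TopologicalSpace (ℝ × ℝ) :=
  @instTopologicalSpaceProd ℝ ℝ sorgenfreyTop sorgenfreyTop

/-!
An open set `U` is encoded by `indicatorCompl U`, which is `0` on `U` and `1` off it: these
functions are upper semicontinuous and `≥ 0`, and a family of open sets is an open cover, ω-cover
or γ-cover exactly when their encodings have property `(𝒪₀)`, `(Ω₀)` or `(Γ₀)`. So selecting
functions for `h = 0` selects from covers.

Conversely, for `f ≥ h` with `f - h` upper semicontinuous the sublevel sets `{f - h < ε}` are open,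
and a family with `(Ω_h)` or `(Γ_h)` gives an ω- or γ-cover by such sets unless one of its members
is uniformly `ε`-close to `h`, and then that member alone is selected. For the targets `𝒪` and `Ω`
the selection principle is applied at each level `ε = 1/(k+1)` to its own subsequence (indices
`Nat.pair k i`). For the target `Γ` the level must go to `0` along the sequence itself, and each
member of the resulting γ-cover is taken from one index only, so that every point is far from `h`
for only finitely many selected functions.
-/

section Selection

variable {α β : Type*}

theorem Sfin.of_image {e : α → β} (he : Function.Injective e) {D : Set α}
    {A B : Set (Set α)} {A' B' : Set (Set β)} (hAD : ∀ s ∈ A, s ⊆ D)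
    (hA : ∀ s ∈ A, e '' s ∈ A') (hB : ∀ s ⊆ D, e '' s ∈ B' → s ∈ B) (h : Sfin A' B') :
    Sfin A B := by
  intro u hu
  obtain ⟨V, hV, hVB⟩ := h (fun n => e '' u n) fun n => hA _ (hu n)
  have himage : ∀ n, e '' (u n ∩ e ⁻¹' V n) = V n := fun n => by
    rw [image_inter_preimage, inter_eq_right.2 (hV n).1]
  refine ⟨fun n => u n ∩ e ⁻¹' V n,
    fun n => ⟨inter_subset_left, ((hV n).2.preimage he.injOn).subset inter_subset_right⟩,
    hB _ (iUnion_subset fun n => inter_subset_left.trans (hAD _ (hu n))) ?_⟩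
  rwa [image_iUnion, iUnion_congr himage]

theorem Sfin.exists_injOn_selection {A B : Set (Set α)} (hS : Sfin A B) {F : ℕ → Set β}
    (g : ℕ → β → α) (hA : ∀ n, g n '' F n ∈ A) :
    ∃ V : ℕ → Set β, (∀ n, V n ⊆ F n ∧ (V n).Finite) ∧
      InjOn (fun p : ℕ × β => g p.1 p.2) {p | p.2 ∈ V p.1} ∧ (⋃ n, g n '' V n) ∈ B := by
  obtain ⟨𝒲, h𝒲, h𝒲B⟩ := hS _ hA
  have hsurj : ∀ n, SurjOn (g n) (F n) (disjointed 𝒲 n) :=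
    fun n => (disjointed_subset 𝒲 n).trans (h𝒲 n).1
  choose V hVF hV using fun n => (hsurj n).exists_bijOn_subset
  refine ⟨V, fun n => ⟨hVF n, ?_⟩, ?_, ?_⟩
  · exact Finite.of_finite_image ((hV n).image_eq ▸ ((h𝒲 n).2.subset (disjointed_subset 𝒲 n)))
      (hV n).injOn
  · rintro ⟨m, f⟩ hf ⟨n, f'⟩ hf' (hff' : g m f = g n f')
    obtain rfl : m = n := by
      by_contra hmn
      exact (disjoint_disjointed 𝒲 hmn).notMem_of_mem_left ((hV m).mapsTo hf)
        (hff' ▸ (hV n).mapsTo hf')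
    exact Prod.ext rfl ((hV m).injOn hf hf' hff')
  · rwa [iUnion_congr fun n => (hV n).image_eq, iUnion_disjointed]

theorem exists_selection_of_injective {ι : Type*} {e : ι → ℕ} (he : Function.Injective e)
    {F : ℕ → Set α} {W : ι → Set α} (hW : ∀ i, W i ⊆ F (e i) ∧ (W i).Finite) :
    ∃ V : ℕ → Set α, (∀ n, V n ⊆ F n ∧ (V n).Finite) ∧ ⋃ n, V n = ⋃ i, W i := by
  refine ⟨fun n => ⋃ i ∈ e ⁻¹' {n}, W i, fun n => ⟨?_, ?_⟩, ?_⟩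
  · exact iUnion₂_subset fun i (hi : e i = n) => hi ▸ (hW i).1
  · exact ((finite_singleton n).preimage he.injOn).biUnion fun i _ => (hW i).2
  · ext f
    simp

end Selection

theorem kindSets_omega_iff {𝒰 : Set (Set X)} :
    kindSets CoverKind.omega 𝒰 ↔ univ ∉ 𝒰 ∧ ∀ A : Set X, A.Finite → ∃ U ∈ 𝒰, A ⊆ U := by
  refine ⟨fun h => h.2, fun ⟨huniv, hfin⟩ => ⟨fun x => ?_, huniv, hfin⟩⟩
  obtain ⟨U, hU, hxU⟩ := hfin {x} (finite_singleton x)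
  exact ⟨U, hU, hxU rfl⟩

theorem kindSets_gamma_iff {𝒰 : Set (Set X)} :
    kindSets CoverKind.gamma 𝒰 ↔ 𝒰.Infinite ∧ ∀ x : X, {U ∈ 𝒰 | x ∉ U}.Finite := by
  refine ⟨fun h => h.2, fun ⟨hinf, hfin⟩ => ⟨fun x => ?_, hinf, hfin⟩⟩
  obtain ⟨U, hU, hxU⟩ := (hinf.sdiff (hfin x)).nonempty
  exact ⟨U, hU, by_contra fun hx => hxU ⟨hU, hx⟩⟩

theorem propO_iff {h : X → ℝ} {T : Set (X → ℝ)} :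
    PropO h T ↔ ∀ x, ∀ ε > 0, ∃ f ∈ T, |f x - h x| < ε := by
  simp only [PropO, Metric.mem_closure_iff, exists_mem_image, Real.dist_eq, abs_sub_comm (h _)]

theorem mem_closure_iff_forall_finite {h : X → ℝ} {T : Set (X → ℝ)} :
    h ∈ closure T ↔ ∀ A : Set X, A.Finite → ∀ ε > 0, ∃ f ∈ T, ∀ x ∈ A, |f x - h x| < ε := by
  have hbasis : (𝓝 h).HasBasis (fun p : Set X × ℕ => p.1.Finite ∧ True)
      fun p => p.1.pi fun x => Metric.ball (h x) (1 / (p.2 + 1)) := by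
    rw [nhds_pi]
    refine hasBasis_pi_same_index (fun x => Metric.nhds_basis_ball_inv_nat_succ) ?_
    intro A k hA _
    obtain ⟨m, hm⟩ := (hA.image k).bddAbove
    refine ⟨m, trivial, fun x hx => Metric.ball_subset_ball ?_⟩
    exact Nat.one_div_le_one_div (hm (mem_image_of_mem k hx))
  simp only [mem_closure_iff_nhds_basis' hbasis, Set.Nonempty, mem_inter_iff, Set.mem_pi,
    Metric.mem_ball, Real.dist_eq, and_true, Prod.forall]
  refine ⟨fun H A hA ε hε => ?_, fun H A n hA => ?_⟩
  · obtain ⟨n, hn⟩ := exists_nat_one_div_lt hε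
    obtain ⟨f, hfA, hf⟩ := H A n hA
    exact ⟨f, hf, fun x hx => (hfA x hx).trans hn⟩
  · obtain ⟨f, hf, hfA⟩ := H A hA _ Nat.one_div_pos_of_nat
    exact ⟨f, hfA, hf⟩

noncomputable def indicatorCompl (U : Set X) : X → ℝ := Uᶜ.indicator 1

theorem indicatorCompl_of_mem {U : Set X} {x : X} (hx : x ∈ U) : indicatorCompl U x = 0 :=
  indicator_of_notMem (notMem_compl_iff.2 hx) _

theorem indicatorCompl_of_notMem {U : Set X} {x : X} (hx : x ∉ U) : indicatorCompl U x = 1 :=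
  indicator_of_mem (mem_compl hx) _

theorem abs_indicatorCompl_lt_one_iff {U : Set X} {x : X} :
    |indicatorCompl U x| < 1 ↔ x ∈ U := by
  by_cases hx : x ∈ U <;> simp [hx, indicatorCompl_of_mem, indicatorCompl_of_notMem]

theorem indicatorCompl_injective : Function.Injective (indicatorCompl : Set X → X → ℝ) := by
  intro U V hUV
  ext x
  rw [← abs_indicatorCompl_lt_one_iff, hUV, abs_indicatorCompl_lt_one_iff]

theorem indicatorCompl_univ : indicatorCompl (univ : Set X) = 0 :=
  funext fun x => indicatorCompl_of_mem (mem_univ x)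

theorem kindProp_zero_image_indicatorCompl_iff (k : CoverKind) (𝒰 : Set (Set X)) :
    kindProp k 0 (indicatorCompl '' 𝒰) ↔ kindSets k 𝒰 := by
  cases k with
  | o =>
    simp only [kindProp, kindSets, propO_iff, IsCover, exists_mem_image,
      Pi.zero_apply, sub_zero]
    refine forall_congr' fun x => ⟨fun H => ?_, fun ⟨U, hU, hx⟩ ε hε => ⟨U, hU, ?_⟩⟩
    · obtain ⟨U, hU, hx⟩ := H 1 one_pos
      exact ⟨U, hU, abs_indicatorCompl_lt_one_iff.1 hx⟩
    · simpa [indicatorCompl_of_mem hx] using hε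
  | omega =>
    have hzero : (0 : X → ℝ) ∈ indicatorCompl '' 𝒰 ↔ univ ∈ 𝒰 :=
      indicatorCompl_univ (X := X) ▸ indicatorCompl_injective.mem_set_image
    rw [kindSets_omega_iff, kindProp, PropOmega, mem_closure_iff_forall_finite, hzero]
    refine and_congr_right' (forall₂_congr fun A _ => ⟨fun H => ?_, fun ⟨U, hU, hAU⟩ ε hε => ?_⟩)
    · obtain ⟨_, ⟨U, hU, rfl⟩, hx⟩ := H 1 one_pos
      exact ⟨U, hU, fun x hxA => abs_indicatorCompl_lt_one_iff.1 (by simpa using hx x hxA)⟩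
    · exact ⟨_, mem_image_of_mem _ hU, fun x hx => by simpa [indicatorCompl_of_mem (hAU hx)]⟩
  | gamma =>
    rw [kindSets_gamma_iff, kindProp, PropGamma, infinite_image_iff indicatorCompl_injective.injOn]
    refine and_congr_right' ⟨fun H x => ?_, fun H ε hε x => ?_⟩
    · refine Finite.of_finite_image ((H 1 one_pos x).subset ?_) indicatorCompl_injective.injOn
      rintro _ ⟨U, ⟨hU, hx⟩, rfl⟩
      exact ⟨mem_image_of_mem _ hU, by simp [indicatorCompl_of_notMem hx]⟩
    · refine ((H x).image indicatorCompl).subset ?_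
      rintro _ ⟨⟨U, hU, rfl⟩, hε'⟩
      refine mem_image_of_mem _ ⟨hU, fun hx => ?_⟩
      simp [indicatorCompl_of_mem hx] at hε'
      linarith

section USC

variable [TopologicalSpace X]

theorem indicatorCompl_mem_USCb {U : Set X} (hU : IsOpen U) : indicatorCompl U ∈ USCb X := by
  refine ⟨upperSemicontinuous_iff_isOpen_preimage.1
    (hU.isClosed_compl.upperSemicontinuous_indicator zero_le_one), 1, fun x => ?_⟩
  by_cases hx : x ∈ U <;> simp [hx, indicatorCompl_of_mem, indicatorCompl_of_notMem]

theorem zero_mem_USCb : (0 : X → ℝ) ∈ USCb X :=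
  indicatorCompl_univ (X := X) ▸ indicatorCompl_mem_USCb isOpen_univ

theorem image_indicatorCompl_mem_PhiH_iff {k : CoverKind} {𝒰 : Set (Set X)}
    (h𝒰 : ∀ U ∈ 𝒰, IsOpen U) :
    indicatorCompl '' 𝒰 ∈ PhiH k 0 (USCb X) ↔ 𝒰 ∈ OpenKindCovers X k := by
  have hUSC : indicatorCompl '' 𝒰 ⊆ USCb X := by
    rintro _ ⟨U, hU, rfl⟩
    exact indicatorCompl_mem_USCb (h𝒰 U hU)
  have hnonneg : ∀ f ∈ indicatorCompl '' 𝒰, 0 ≤ f ∧ f - 0 ∈ USCb X := by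
    rintro _ ⟨U, hU, rfl⟩
    refine ⟨fun x => ?_, by simpa using hUSC (mem_image_of_mem _ hU)⟩
    by_cases hx : x ∈ U <;> simp [hx, indicatorCompl_of_mem, indicatorCompl_of_notMem]
  exact ⟨fun h => ⟨h𝒰, (kindProp_zero_image_indicatorCompl_iff k 𝒰).1 h.2.1⟩,
    fun h => ⟨hUSC, (kindProp_zero_image_indicatorCompl_iff k 𝒰).2 h.2, hnonneg⟩⟩

theorem sfin_of_sfin_PhiH_zero {Φ Ψ : CoverKind}
    (h : Sfin (PhiH Φ 0 (USCb X)) (PhiH Ψ 0 (USCb X))) :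
    Sfin (OpenKindCovers X Φ) (OpenKindCovers X Ψ) :=
  Sfin.of_image indicatorCompl_injective (D := {U | IsOpen U}) (fun _ h𝒰 => h𝒰.1)
    (fun _ h𝒰 => (image_indicatorCompl_mem_PhiH_iff h𝒰.1).2 h𝒰)
    (fun _ h𝒰 => (image_indicatorCompl_mem_PhiH_iff h𝒰).1) h

end USC

def sublevelSets (h : X → ℝ) (F : Set (X → ℝ)) (ε : ℝ) : Set (Set X) :=
  (fun f => {x | f x - h x < ε}) '' F

theorem univ_mem_sublevelSets_iff {h : X → ℝ} {F : Set (X → ℝ)} {ε : ℝ} :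
    univ ∈ sublevelSets h F ε ↔ ∃ f ∈ F, ∀ x, f x - h x < ε := by
  simp [sublevelSets, eq_univ_iff_forall]

theorem propGamma_iUnion {h : X → ℝ} {T : ℕ → Set (X → ℝ)} {δ : ℕ → ℝ}
    (hδ : Tendsto δ atTop (𝓝 0)) (hT : ∀ n, (T n).Finite ∧ ∀ f ∈ T n, h ≤ f ∧ f ≠ h)
    (hinf : {n | (T n).Nonempty}.Infinite)
    (hfar : ∀ x, {p : ℕ × (X → ℝ) | p.2 ∈ T p.1 ∧ δ p.1 ≤ p.2 x - h x}.Finite) :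
    PropGamma h (⋃ n, T n) := by
  have hδε : ∀ ε > 0, ∃ K, ∀ n ≥ K, δ n < ε :=
    fun ε hε => eventually_atTop.1 (hδ.eventually (gt_mem_nhds hε))
  have habs : ∀ f ∈ ⋃ n, T n, ∀ x, |f x - h x| = f x - h x := fun f hf x => by
    obtain ⟨n, hn⟩ := mem_iUnion.1 hf
    exact abs_of_nonneg (sub_nonneg.2 ((hT n).2 f hn).1 x)
  have hfinite : ∀ ε > 0, ∀ x, {f ∈ ⋃ n, T n | ε ≤ |f x - h x|}.Finite := by
    intro ε hε x
    obtain ⟨K, hK⟩ := hδε ε hε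
    refine (((finite_Iio K).biUnion fun n _ => (hT n).1).union ((hfar x).image Prod.snd)).subset ?_
    rintro f ⟨hf, hεf⟩
    obtain ⟨n, hn⟩ := mem_iUnion.1 hf
    rcases lt_or_ge n K with hnK | hnK
    · exact Or.inl (mem_biUnion hnK hn)
    · exact Or.inr ⟨(n, f), ⟨hn, (hK n hnK).le.trans (habs f hf x ▸ hεf)⟩, rfl⟩
  refine ⟨fun hfin => hinf ?_, hfinite⟩
  -- a function occurring at infinitely many levels would be `h` itself
  have hocc : ∀ f ∈ ⋃ n, T n, {n | f ∈ T n}.Finite := by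
    intro f hf
    obtain ⟨n₀, hn₀⟩ := mem_iUnion.1 hf
    obtain ⟨x, hx⟩ : ∃ x, h x < f x := by
      by_contra! hle
      exact ((hT n₀).2 f hn₀).2 (le_antisymm hle ((hT n₀).2 f hn₀).1)
    obtain ⟨K, hK⟩ := hδε _ (sub_pos.2 hx)
    refine ((finite_Iio K).union ((hfar x).image Prod.fst)).subset fun n hn => ?_
    rcases lt_or_ge n K with hnK | hnK
    · exact Or.inl hnK
    · exact Or.inr ⟨(n, f), ⟨hn, (hK n hnK).le⟩, rfl⟩
  refine (hfin.biUnion hocc).subset fun n ⟨f, hf⟩ => ?_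
  exact mem_biUnion (mem_iUnion.2 ⟨n, hf⟩) hf

theorem iUnion_mem_PhiH {Φ Ψ : CoverKind} {h : X → ℝ} {H : Set (X → ℝ)}
    {F V : ℕ → Set (X → ℝ)} (hF : ∀ n, F n ∈ PhiH Φ h H) (hV : ∀ n, V n ⊆ F n)
    (hΨ : kindProp Ψ h (⋃ n, V n)) : (⋃ n, V n) ∈ PhiH Ψ h H := by
  refine ⟨iUnion_subset fun n => (hV n).trans (hF n).1, hΨ, fun f hf => ?_⟩
  obtain ⟨n, hn⟩ := mem_iUnion.1 hf
  exact (hF n).2.2 f (hV n hn)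

theorem exists_selection_propGamma_of_infinite {h : X → ℝ} {F : ℕ → Set (X → ℝ)}
    (hge : ∀ n, ∀ f ∈ F n, h ≤ f)
    (hclose : {n | univ ∈ sublevelSets h (F n \ {h}) (1 / (n + 1))}.Infinite) :
    ∃ V : ℕ → Set (X → ℝ), (∀ n, V n ⊆ F n ∧ (V n).Finite) ∧ PropGamma h (⋃ n, V n) := by
  choose! f hf hfU using fun n (hn : univ ∈ sublevelSets h (F n \ {h}) (1 / (n + 1))) =>
    univ_mem_sublevelSets_iff.1 hn
  set T : ℕ → Set (X → ℝ) :=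
    fun n => {g | univ ∈ sublevelSets h (F n \ {h}) (1 / (n + 1)) ∧ g = f n}
  have hTF : ∀ n, T n ⊆ F n \ {h} := fun n g ⟨hn, hg⟩ => hg ▸ hf n hn
  have hTfin : ∀ n, (T n).Finite :=
    fun n => ((subsingleton_singleton (a := f n)).anti fun g hg => hg.2).finite
  refine ⟨T, fun n => ⟨(hTF n).trans sdiff_subset, hTfin n⟩,
    propGamma_iUnion tendsto_one_div_add_atTop_nhds_zero_nat
      (fun n => ⟨hTfin n, fun g hg => ⟨hge n g (hTF n hg).1, (hTF n hg).2⟩⟩) ?_ fun x => ?_⟩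
  · exact hclose.mono fun n hn => ⟨f n, hn, rfl⟩
  · refine finite_empty.subset ?_
    rintro ⟨n, g⟩ ⟨⟨hn, hg : g = f n⟩, hle⟩
    subst hg
    exact absurd (hfU n hn x) (not_lt.2 hle)

section Forward

variable [TopologicalSpace X]

theorem isOpen_of_mem_sublevelSets {h : X → ℝ} {F : Set (X → ℝ)} {ε : ℝ}
    (hF : ∀ f ∈ F, f - h ∈ USCb X) : ∀ U ∈ sublevelSets h F ε, IsOpen U := by
  rintro _ ⟨f, hf, rfl⟩
  exact (hF f hf).1 ε

theorem sublevelSets_mem_omega {h : X → ℝ} {F : Set (X → ℝ)} {ε : ℝ} (hε : 0 < ε)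
    (hF : ∀ f ∈ F, f - h ∈ USCb X) (hcl : h ∈ closure F) (huniv : univ ∉ sublevelSets h F ε) :
    sublevelSets h F ε ∈ OpenKindCovers X CoverKind.omega := by
  refine ⟨isOpen_of_mem_sublevelSets hF, kindSets_omega_iff.2 ⟨huniv, fun A hA => ?_⟩⟩
  obtain ⟨f, hf, hfA⟩ := mem_closure_iff_forall_finite.1 hcl A hA ε hε
  exact ⟨_, mem_image_of_mem _ hf, fun x hx => (le_abs_self _).trans_lt (hfA x hx)⟩

theorem sublevelSets_mem_gamma {h : X → ℝ} {F : Set (X → ℝ)} {ε : ℝ} (hε : 0 < ε)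
    (hF : ∀ f ∈ F, f - h ∈ USCb X) (hΓ : PropGamma h F) (huniv : univ ∉ sublevelSets h F ε) :
    sublevelSets h F ε ∈ OpenKindCovers X CoverKind.gamma := by
  have hfar : ∀ x, ∀ f ∈ F, x ∉ {y | f y - h y < ε} → f ∈ {f ∈ F | ε ≤ |f x - h x|} :=
    fun x f hf hx => ⟨hf, (not_lt.1 hx).trans (le_abs_self _)⟩
  refine ⟨isOpen_of_mem_sublevelSets hF, kindSets_gamma_iff.2 ⟨fun hfin => hΓ.1 ?_, fun x => ?_⟩⟩
  · -- the functions with a given sublevel set `U ≠ univ` are all far from `h` at a point off `U`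
    refine (hfin.biUnion (t := fun U => {f ∈ F | {y | f y - h y < ε} = U}) fun U hU => ?_).subset
      fun f hf => mem_biUnion (mem_image_of_mem _ hf) ⟨hf, rfl⟩
    obtain ⟨x, hx⟩ := (ne_univ_iff_exists_notMem U).1 fun hU' => huniv (hU' ▸ hU)
    exact (hΓ.2 ε hε x).subset fun f ⟨hf, hfU⟩ => hfar x f hf (hfU ▸ hx)
  · refine ((hΓ.2 ε hε x).image fun f => {y | f y - h y < ε}).subset ?_
    rintro _ ⟨⟨f, hf, rfl⟩, hx⟩
    exact mem_image_of_mem _ (hfar x f hf hx)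

theorem sublevelSets_mem_openKindCovers {Φ : CoverKind}
    (hΦ : Φ = CoverKind.omega ∨ Φ = CoverKind.gamma) {h : X → ℝ} {F : Set (X → ℝ)} {ε : ℝ}
    (hε : 0 < ε) (hF : F ∈ PhiH Φ h (USCb X)) (huniv : univ ∉ sublevelSets h (F \ {h}) ε) :
    sublevelSets h (F \ {h}) ε ∈ OpenKindCovers X Φ := by
  have hUSC : ∀ f ∈ F \ {h}, f - h ∈ USCb X := fun f hf => (hF.2.2 f hf.1).2
  rcases hΦ with rfl | rfl
  · have hΩ : PropOmega h F := hF.2.1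
    rw [sdiff_singleton_eq_self hΩ.1] at hUSC huniv ⊢
    exact sublevelSets_mem_omega hε hUSC hΩ.2 huniv
  · have hΓ : PropGamma h F := hF.2.1
    refine sublevelSets_mem_gamma hε hUSC ⟨hΓ.1.sdiff (finite_singleton h), fun ε hε x => ?_⟩ huniv
    exact (hΓ.2 ε hε x).subset fun f hf => ⟨hf.1.1, hf.2⟩

theorem exists_selection_sublevelSets {Φ Ψ : CoverKind}
    (hΦ : Φ = CoverKind.omega ∨ Φ = CoverKind.gamma)
    (hX : Sfin (OpenKindCovers X Φ) (OpenKindCovers X Ψ)) {h : X → ℝ} {F : ℕ → Set (X → ℝ)}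
    (hF : ∀ n, F n ∈ PhiH Φ h (USCb X)) {ε : ℝ} (hε : 0 < ε) :
    ∃ V : ℕ → Set (X → ℝ), (∀ n, V n ⊆ F n \ {h} ∧ (V n).Finite) ∧
      (univ ∈ sublevelSets h (⋃ n, V n) ε ∨
        sublevelSets h (⋃ n, V n) ε ∈ OpenKindCovers X Ψ) := by
  classical
  by_cases hclose : ∃ n, univ ∈ sublevelSets h (F n \ {h}) ε
  · obtain ⟨n, f, hf, hfε⟩ := hclose
    refine ⟨fun m => if m = n then {f} else ∅, fun m => ?_, Or.inl ⟨f, ?_, hfε⟩⟩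
    · dsimp only
      split_ifs with hm
      · exact ⟨singleton_subset_iff.2 (hm ▸ hf), finite_singleton f⟩
      · exact ⟨empty_subset _, finite_empty⟩
    · exact mem_iUnion.2 ⟨n, by simp⟩
  · push Not at hclose
    obtain ⟨V, hV, -, hVΨ⟩ :=
      hX.exists_injOn_selection (fun (_ : ℕ) (f : X → ℝ) => {x | f x - h x < ε})
      fun n => sublevelSets_mem_openKindCovers hΦ hε (hF n) (hclose n)
    exact ⟨V, hV, Or.inr (by rwa [sublevelSets, image_iUnion])⟩

theorem exists_selection_forall_sublevelSets {Φ Ψ : CoverKind}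
    (hΦ : Φ = CoverKind.omega ∨ Φ = CoverKind.gamma)
    (hX : Sfin (OpenKindCovers X Φ) (OpenKindCovers X Ψ)) {h : X → ℝ} {F : ℕ → Set (X → ℝ)}
    (hF : ∀ n, F n ∈ PhiH Φ h (USCb X)) :
    ∃ V : ℕ → Set (X → ℝ), (∀ n, V n ⊆ F n ∧ (V n).Finite) ∧
      (∀ f ∈ ⋃ n, V n, h ≤ f ∧ f ≠ h) ∧
      ∀ k : ℕ, ∃ T ⊆ ⋃ n, V n, univ ∈ sublevelSets h T (1 / (k + 1)) ∨
        sublevelSets h T (1 / (k + 1)) ∈ OpenKindCovers X Ψ := by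
  choose W hW hWΨ using fun k : ℕ =>
    exists_selection_sublevelSets hΦ hX (F := fun i => F (Nat.pair k i)) (fun i => hF _)
      (Nat.one_div_pos_of_nat (n := k))
  obtain ⟨V, hV, hVW⟩ := exists_selection_of_injective (e := fun p : ℕ × ℕ => Nat.pair p.1 p.2)
    (F := fun n => F n \ {h}) (W := fun p => W p.1 p.2)
    (fun p q hpq => Prod.ext_iff.2 (Nat.pair_eq_pair.1 hpq)) fun p => hW p.1 p.2
  refine ⟨V, fun n => ⟨(hV n).1.trans sdiff_subset, (hV n).2⟩, fun f hf => ?_,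
    fun k => ⟨⋃ i, W k i, ?_, hWΨ k⟩⟩
  · obtain ⟨n, hn⟩ := mem_iUnion.1 hf
    exact ⟨((hF n).2.2 f ((hV n).1 hn).1).1, ((hV n).1 hn).2⟩
  · rw [hVW]
    exact iUnion_subset fun i => subset_iUnion (fun p : ℕ × ℕ => W p.1 p.2) (k, i)

theorem propO_of_forall_sublevelSets {h : X → ℝ} {T : Set (X → ℝ)} (hge : ∀ f ∈ T, h ≤ f)
    (hT : ∀ k : ℕ, ∃ T' ⊆ T, univ ∈ sublevelSets h T' (1 / (k + 1)) ∨
      sublevelSets h T' (1 / (k + 1)) ∈ OpenKindCovers X CoverKind.o) :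
    PropO h T := by
  refine propO_iff.2 fun x ε hε => ?_
  obtain ⟨k, hk⟩ := exists_nat_one_div_lt hε
  obtain ⟨T', hT'T, hT'⟩ := hT k
  obtain ⟨f, hf, hfx⟩ : ∃ f ∈ T', f x - h x < 1 / (k + 1) := by
    rcases hT' with hT' | ⟨-, hcov⟩
    · obtain ⟨f, hf, hfU⟩ := univ_mem_sublevelSets_iff.1 hT'
      exact ⟨f, hf, hfU x⟩
    · obtain ⟨_, ⟨f, hf, rfl⟩, hx⟩ := hcov x
      exact ⟨f, hf, hx⟩
  refine ⟨f, hT'T hf, ?_⟩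
  rw [abs_of_nonneg (sub_nonneg.2 (hge f (hT'T hf) x))]
  exact hfx.trans hk

theorem mem_closure_of_forall_sublevelSets {h : X → ℝ} {T : Set (X → ℝ)}
    (hge : ∀ f ∈ T, h ≤ f)
    (hT : ∀ k : ℕ, ∃ T' ⊆ T, univ ∈ sublevelSets h T' (1 / (k + 1)) ∨
      sublevelSets h T' (1 / (k + 1)) ∈ OpenKindCovers X CoverKind.omega) :
    h ∈ closure T := by
  refine mem_closure_iff_forall_finite.2 fun A hA ε hε => ?_
  obtain ⟨k, hk⟩ := exists_nat_one_div_lt hε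
  obtain ⟨T', hT'T, hT'⟩ := hT k
  obtain ⟨f, hf, hfA⟩ : ∃ f ∈ T', ∀ x ∈ A, f x - h x < 1 / (k + 1) := by
    rcases hT' with hT' | ⟨-, hΩ⟩
    · obtain ⟨f, hf, hfU⟩ := univ_mem_sublevelSets_iff.1 hT'
      exact ⟨f, hf, fun x _ => hfU x⟩
    · obtain ⟨_, ⟨f, hf, rfl⟩, hAU⟩ := (kindSets_omega_iff.1 hΩ).2 A hA
      exact ⟨f, hf, hAU⟩
  refine ⟨f, hT'T hf, fun x hx => ?_⟩
  rw [abs_of_nonneg (sub_nonneg.2 (hge f (hT'T hf) x))]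
  exact (hfA x hx).trans hk

theorem exists_selection_propGamma_of_forall_ge {Φ : CoverKind}
    (hΦ : Φ = CoverKind.omega ∨ Φ = CoverKind.gamma)
    (hX : Sfin (OpenKindCovers X Φ) (OpenKindCovers X CoverKind.gamma)) {h : X → ℝ}
    {F : ℕ → Set (X → ℝ)} (hF : ∀ n, F n ∈ PhiH Φ h (USCb X)) {N : ℕ}
    (hN : ∀ n ≥ N, univ ∉ sublevelSets h (F n \ {h}) (1 / (n + 1))) :
    ∃ V : ℕ → Set (X → ℝ), (∀ n, V n ⊆ F n ∧ (V n).Finite) ∧ PropGamma h (⋃ n, V n) := by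
  set g : ℕ → (X → ℝ) → Set X := fun j f => {x | f x - h x < 1 / ((j + N : ℕ) + 1)}
  obtain ⟨W, hW, hinj, hΓ⟩ := hX.exists_injOn_selection (F := fun j => F (j + N) \ {h}) g
    fun j => sublevelSets_mem_openKindCovers hΦ Nat.one_div_pos_of_nat (hF _)
      (hN _ (Nat.le_add_left N j))
  obtain ⟨hΓinf, hΓfin⟩ := kindSets_gamma_iff.1 hΓ.2
  obtain ⟨V, hV, hVW⟩ := exists_selection_of_injective (e := (· + N)) (add_left_injective N)
    (F := F) (W := W) fun j => ⟨(hW j).1.trans sdiff_subset, (hW j).2⟩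
  have hWh : ∀ j, ∀ f ∈ W j, h ≤ f ∧ f ≠ h :=
    fun j f hf => ⟨((hF _).2.2 f ((hW j).1 hf).1).1, ((hW j).1 hf).2⟩
  refine ⟨V, hV, hVW ▸ propGamma_iUnion
    (tendsto_one_div_add_atTop_nhds_zero_nat.comp (tendsto_add_atTop_nat N))
    (fun j => ⟨(hW j).2, hWh j⟩) ?_ fun x => ?_⟩
  · refine fun hfin => hΓinf ((hfin.biUnion fun j _ => (hW j).2.image (g j)).subset fun U hU => ?_)
    obtain ⟨j, hj⟩ := mem_iUnion.1 hU
    exact mem_biUnion (image_nonempty.1 ⟨U, hj⟩) hj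
  · -- a selected function far from `h` at `x` comes from a member of the γ-cover missing `x`
    refine Finite.of_finite_image ((hΓfin x).subset ?_) (hinj.mono fun p hp => hp.1)
    rintro _ ⟨⟨j, f⟩, ⟨hf, hle⟩, rfl⟩
    exact ⟨mem_iUnion.2 ⟨j, mem_image_of_mem _ hf⟩, not_lt.2 hle⟩

theorem sfin_PhiH_of_sfin {Φ Ψ : CoverKind} (hΦ : Φ = CoverKind.omega ∨ Φ = CoverKind.gamma)
    (hX : Sfin (OpenKindCovers X Φ) (OpenKindCovers X Ψ)) (h : X → ℝ) :
    Sfin (PhiH Φ h (USCb X)) (PhiH Ψ h (USCb X)) := by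
  intro F hF
  suffices ∃ V : ℕ → Set (X → ℝ), (∀ n, V n ⊆ F n ∧ (V n).Finite) ∧ kindProp Ψ h (⋃ n, V n) by
    obtain ⟨V, hV, hΨ⟩ := this
    exact ⟨V, hV, iUnion_mem_PhiH hF (fun n => (hV n).1) hΨ⟩
  cases Ψ with
  | o =>
    obtain ⟨V, hV, hVh, hlevels⟩ := exists_selection_forall_sublevelSets hΦ hX hF
    exact ⟨V, hV, propO_of_forall_sublevelSets (fun f hf => (hVh f hf).1) hlevels⟩
  | omega =>
    obtain ⟨V, hV, hVh, hlevels⟩ := exists_selection_forall_sublevelSets hΦ hX hF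
    exact ⟨V, hV, fun hh => (hVh h hh).2 rfl,
      mem_closure_of_forall_sublevelSets (fun f hf => (hVh f hf).1) hlevels⟩
  | gamma =>
    by_cases hclose : {n | univ ∈ sublevelSets h (F n \ {h}) (1 / (n + 1))}.Infinite
    · exact exists_selection_propGamma_of_infinite (fun n f hf => ((hF n).2.2 f hf).1) hclose
    · obtain ⟨N, hN⟩ := eventually_atTop.1 <|
        not_frequently.1 (Nat.frequently_atTop_iff_infinite.not.2 hclose)
      exact exists_selection_propGamma_of_forall_ge hΦ hX hF hN

end Forward

theorem statement1_general {X : Type*} [TopologicalSpace X]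
    (Φ Ψ : CoverKind) (hΦ : Φ = CoverKind.omega ∨ Φ = CoverKind.gamma) :
    Sfin (OpenKindCovers X Φ) (OpenKindCovers X Ψ) ↔
      ∀ h ∈ USCb X, Sfin (PhiH Φ h (USCb X)) (PhiH Ψ h (USCb X)) :=
  ⟨fun hX h _ => sfin_PhiH_of_sfin hΦ hX h,
    fun hUSC => sfin_of_sfin_PhiH_zero (hUSC 0 zero_mem_USCb)⟩

/-- For Φ ∈ {Ω, Γ}, Ψ ∈ {𝒪, Ω, Γ} with ⟨Φ,Ψ⟩ ≠ ⟨Ω,𝒪⟩ (or, alternatively,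
with X possessing property (ε)), and X an infinite Hausdorff space:
X is an S_fin(Φ,Ψ)-space iff for every h ∈ USC*_p(X) the family USC*_p(X) satisfies
the selection principle S_fin(Φ_h,Ψ_h). -/
theorem statement1 {X : Type*} [TopologicalSpace X] [T2Space X] [Infinite X]
    (Φ Ψ : CoverKind) (hΦ : Φ = CoverKind.omega ∨ Φ = CoverKind.gamma)
    (hpair : ¬(Φ = CoverKind.omega ∧ Ψ = CoverKind.o) ∨ PropEps X) :
    Sfin (OpenKindCovers X Φ) (OpenKindCovers X Ψ) ↔
      ∀ h ∈ USCb X, Sfin (PhiH Φ h (USCb X)) (PhiH Ψ h (USCb X)) :=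
  statement1_general Φ Ψ hΦ

end Selectors
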